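/- arXiv:1610.06726 — 2 statements merged into one kernel-verified Lean document; each statement's English description precedes it below -/
import Mathlib

section
/- Let X be a metric space, let 0 < β ≤ α ≤ 1 and T ∈ (0,1]. Let g : ℝ → ℝ be twice differentiable with g, g', g'' bounded, and let u, v : [0,T] × X → ℝ satisfy ‖u‖_{𝒞^α_T} < ∞, ‖v‖_{𝒞^α_T} < ∞ and u(0,·) = v(0,·). Then there is a constant C depending only on α and β such that ‖g ∘ u − g ∘ v‖_{𝒞^β_T} ≤ C T^{(α−β)/2} ‖g‖_{C^2} (1 + ‖u‖_{𝒞^α_T} + ‖v‖_{𝒞^α_T}) ‖u − v‖_{𝒞^α_T}. -/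
open scoped ENNReal

/-- The sup norm `sup_x |f x|`, valued in `ℝ≥0∞`. -/
noncomputable def supN {X : Type*} (f : X → ℝ) : ℝ≥0∞ :=
  ⨆ x, ENNReal.ofReal |f x|

/-- The Hölder seminorm `[f]_{C^α} = sup_{x ≠ y} |f x - f y| / d(x,y)^α`, valued in `ℝ≥0∞`. -/
noncomputable def hSemi {X : Type*} [MetricSpace X] (α : ℝ) (f : X → ℝ) : ℝ≥0∞ :=
  ⨆ (x : X) (y : X) (_ : x ≠ y), ENNReal.ofReal (|f x - f y| / dist x y ^ α)

/-- The Hölder norm `‖f‖_{C^α} = sup_x |f x| + [f]_{C^α}`. -/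
noncomputable def hNorm {X : Type*} [MetricSpace X] (α : ℝ) (f : X → ℝ) : ℝ≥0∞ :=
  supN f + hSemi α f

/-- The `C^2` norm of `g : ℝ → ℝ`: `sup |g| + sup |g'| + sup |g''|`. -/
noncomputable def c2Norm (g : ℝ → ℝ) : ℝ≥0∞ :=
  supN g + supN (deriv g) + supN (deriv (deriv g))

/-- `‖u‖_{C_T C^α} = sup_{t ∈ [0,T]} ‖u(t,·)‖_{C^α}`. -/
noncomputable def pCTC {X : Type*} [MetricSpace X] (T α : ℝ) (u : ℝ → X → ℝ) : ℝ≥0∞ :=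
  ⨆ t ∈ Set.Icc (0 : ℝ) T, hNorm α (u t)

/-- `‖u‖_{C_T^{α/2} L^∞} = sup_{s ≠ t ∈ [0,T]} sup_x |u(t,x) - u(s,x)| / |t-s|^{α/2}`. -/
noncomputable def pHold {X : Type*} (T α : ℝ) (u : ℝ → X → ℝ) : ℝ≥0∞ :=
  ⨆ (s ∈ Set.Icc (0 : ℝ) T) (t ∈ Set.Icc (0 : ℝ) T) (_ : s ≠ t) (x : X),
    ENNReal.ofReal (|u t x - u s x| / |t - s| ^ (α / 2))

/-- The parabolic Hölder norm `‖u‖_{𝒞^α_T} = ‖u‖_{C_T C^α} + ‖u‖_{C_T^{α/2} L^∞}`. -/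
noncomputable def pNorm {X : Type*} [MetricSpace X] (T α : ℝ) (u : ℝ → X → ℝ) : ℝ≥0∞ :=
  pCTC T α u + pHold T α u

/-!
Write `δ = u - v` and `F = g ∘ u - g ∘ v`. Since `δ(0, ·) = 0`, the time regularity of `δ` gives
`|δ| ≤ ‖δ‖ T^{α/2}`, so `|F| ≤ ‖g'‖ ‖δ‖ T^{α/2}`. For increments, a mean value argument along the
segment joining `(c, d)` to `(a, b)` gives
`|(g a - g b) - (g c - g d)| ≤ ‖g'‖ |(a - b) - (c - d)| + ‖g''‖ (|a - b| + |c - d|) |b - d|`,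
so the `α`-increments of `F` are bounded by `‖g‖_{C²} (‖δ‖ + 2 ‖δ‖ T^{α/2} ‖v‖)`.
Passing from `α` to `β` costs `T^{(α-β)/2}`: for time increments because `|t - s| ≤ T`, for
space increments at distance at most `√T` likewise, and at larger distances the smallness of `|F|`
takes over.
-/

theorem abs_sub_le_of_abs_deriv_le {f : ℝ → ℝ} {K : ℝ} (hf : Differentiable ℝ f)
    (hK : ∀ z, |deriv f z| ≤ K) (a b : ℝ) : |f a - f b| ≤ K * |a - b| := by
  simpa only [Real.norm_eq_abs] using Convex.norm_image_sub_le_of_norm_deriv_le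
    (fun z _ => hf z) (fun z _ => (Real.norm_eq_abs _).trans_le (hK z)) convex_univ
    (Set.mem_univ b) (Set.mem_univ a)

theorem abs_sub_sub_sub_le {g : ℝ → ℝ} {K₁ K₂ : ℝ} (hg : Differentiable ℝ g)
    (hg' : Differentiable ℝ (deriv g)) (hK₁ : ∀ z, |deriv g z| ≤ K₁)
    (hK₂ : ∀ z, |deriv (deriv g) z| ≤ K₂) (a b c d : ℝ) :
    |(g a - g b) - (g c - g d)| ≤
      K₁ * |(a - b) - (c - d)| + K₂ * ((|a - b| + |c - d|) * |b - d|) := by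
  set p : ℝ → ℝ := fun θ => c + θ * (a - c)
  set q : ℝ → ℝ := fun θ => d + θ * (b - d)
  have hp : ∀ θ, HasDerivAt p (a - c) θ := fun θ => by
    simpa [p] using ((hasDerivAt_id θ).mul_const (a - c)).const_add c
  have hq : ∀ θ, HasDerivAt q (b - d) θ := fun θ => by
    simpa [q] using ((hasDerivAt_id θ).mul_const (b - d)).const_add d
  have hderiv : ∀ θ, HasDerivAt (fun θ => g (p θ) - g (q θ))
      (deriv g (p θ) * (a - c) - deriv g (q θ) * (b - d)) θ := fun θ =>
    ((hg (p θ)).hasDerivAt.comp θ (hp θ)).sub ((hg (q θ)).hasDerivAt.comp θ (hq θ))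
  have hbound : ∀ θ ∈ Set.Ico (0 : ℝ) 1,
      ‖deriv g (p θ) * (a - c) - deriv g (q θ) * (b - d)‖ ≤
        K₁ * |(a - b) - (c - d)| + K₂ * ((|a - b| + |c - d|) * |b - d|) := by
    rintro θ ⟨hθ0, hθ1⟩
    have hpq : |p θ - q θ| ≤ |a - b| + |c - d| := by
      have : p θ - q θ = θ * (a - b) + (1 - θ) * (c - d) := by simp only [p, q]; ring
      rw [this]
      refine (abs_add_le _ _).trans ?_
      rw [abs_mul, abs_mul, abs_of_nonneg hθ0, abs_of_nonneg (sub_nonneg.2 hθ1.le)]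
      nlinarith [abs_nonneg (a - b), abs_nonneg (c - d)]
    have hsplit : deriv g (p θ) * (a - c) - deriv g (q θ) * (b - d) =
        deriv g (p θ) * ((a - b) - (c - d)) + (deriv g (p θ) - deriv g (q θ)) * (b - d) := by
      ring
    have hK₂0 : 0 ≤ K₂ := (abs_nonneg _).trans (hK₂ 0)
    rw [Real.norm_eq_abs, hsplit]
    calc _ ≤ |deriv g (p θ)| * |(a - b) - (c - d)| + |deriv g (p θ) - deriv g (q θ)| * |b - d| := by
          rw [← abs_mul, ← abs_mul]; exact abs_add_le _ _
      _ ≤ K₁ * |(a - b) - (c - d)| + K₂ * |p θ - q θ| * |b - d| := by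
          gcongr
          exacts [hK₁ _, abs_sub_le_of_abs_deriv_le hg' hK₂ _ _]
      _ ≤ K₁ * |(a - b) - (c - d)| + K₂ * ((|a - b| + |c - d|) * |b - d|) := by
          rw [mul_assoc]; gcongr
  simpa [p, q, Real.norm_eq_abs] using
    norm_image_sub_le_of_norm_deriv_le_segment_01' (fun θ _ => (hderiv θ).hasDerivWithinAt) hbound

theorem rpow_le_rpow_sub_mul_rpow {ρ R a b : ℝ} (hρ : 0 < ρ) (hρR : ρ ≤ R) (hba : b ≤ a) :
    ρ ^ a ≤ R ^ (a - b) * ρ ^ b :=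
  calc ρ ^ a = ρ ^ (a - b) * ρ ^ b := by rw [← Real.rpow_add hρ, sub_add_cancel]
    _ ≤ R ^ (a - b) * ρ ^ b := by gcongr

theorem abs_le_toReal_of_supN_le {f : ℝ → ℝ} {S : ℝ≥0∞} (hS : S ≠ ⊤) (h : supN f ≤ S) (z : ℝ) :
    |f z| ≤ S.toReal :=
  (ENNReal.ofReal_le_iff_le_toReal hS).1 ((le_iSup (fun z => ENNReal.ofReal |f z|) z).trans h)

section ParabolicHolder

variable {X : Type*} [MetricSpace X] {T α β L : ℝ} {f : ℝ → X → ℝ}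

/-- The increment bounds behind `pNorm T α f`, with a real constant `L`. -/
structure ParabolicHolderWith (T α L : ℝ) (f : ℝ → X → ℝ) : Prop where
  space : ∀ t ∈ Set.Icc 0 T, ∀ x y, x ≠ y → |f t x - f t y| ≤ L * dist x y ^ α
  time : ∀ s ∈ Set.Icc 0 T, ∀ t ∈ Set.Icc 0 T, s ≠ t → ∀ x,
    |f t x - f s x| ≤ L * |t - s| ^ (α / 2)

theorem hNorm_le_pNorm {t : ℝ} (ht : t ∈ Set.Icc 0 T) : hNorm α (f t) ≤ pNorm T α f :=
  (le_iSup₂ (f := fun t (_ : t ∈ Set.Icc (0 : ℝ) T) => hNorm α (f t)) t ht).trans le_self_add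

theorem abs_le_toReal_pNorm (hf : pNorm T α f ≠ ⊤) {t : ℝ} (ht : t ∈ Set.Icc 0 T) (x : X) :
    |f t x| ≤ (pNorm T α f).toReal :=
  (ENNReal.ofReal_le_iff_le_toReal hf).1
    ((le_iSup (fun x => ENNReal.ofReal |f t x|) x).trans (le_self_add.trans (hNorm_le_pNorm ht)))

theorem parabolicHolderWith_toReal_pNorm (hf : pNorm T α f ≠ ⊤) :
    ParabolicHolderWith T α (pNorm T α f).toReal f where
  space t ht x y hxy := by
    rw [← div_le_iff₀ (Real.rpow_pos_of_pos (dist_pos.2 hxy) _),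
      ← ENNReal.ofReal_le_iff_le_toReal hf]
    exact ((le_iSup_of_le x (le_iSup_of_le y (le_iSup_of_le hxy le_rfl)) : _ ≤ hSemi α (f t))).trans
      (le_add_self.trans (hNorm_le_pNorm ht))
  time s hs t ht hst x := by
    rw [← div_le_iff₀ (Real.rpow_pos_of_pos (abs_pos.2 (sub_ne_zero.2 hst.symm)) _),
      ← ENNReal.ofReal_le_iff_le_toReal hf]
    exact ((le_iSup_of_le s (le_iSup_of_le hs (le_iSup_of_le t (le_iSup_of_le ht
      (le_iSup_of_le hst (le_iSup_of_le x le_rfl))))) : _ ≤ pHold T α f)).trans le_add_self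

theorem pNorm_le_ofReal {M : ℝ} (hM : 0 ≤ M) (hL : 0 ≤ L)
    (hsup : ∀ t ∈ Set.Icc 0 T, ∀ x, |f t x| ≤ M) (hf : ParabolicHolderWith T α L f) :
    pNorm T α f ≤ ENNReal.ofReal (M + 2 * L) := by
  have hctc : pCTC T α f ≤ ENNReal.ofReal M + ENNReal.ofReal L :=
    iSup₂_le fun t ht => add_le_add
      (iSup_le fun x => ENNReal.ofReal_le_ofReal (hsup t ht x))
      (iSup₂_le fun x y => iSup_le fun hxy => ENNReal.ofReal_le_ofReal <|
        div_le_of_le_mul₀ (Real.rpow_nonneg dist_nonneg _) hL (hf.space t ht x y hxy))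
  have hhold : pHold T α f ≤ ENNReal.ofReal L :=
    iSup₂_le fun s hs => iSup₂_le fun t ht => iSup₂_le fun hst x =>
      ENNReal.ofReal_le_ofReal <|
        div_le_of_le_mul₀ (Real.rpow_nonneg (abs_nonneg _) _) hL (hf.time s hs t ht hst x)
  rw [two_mul, ← add_assoc, ENNReal.ofReal_add (by positivity) hL, ENNReal.ofReal_add hM hL]
  exact add_le_add hctc hhold

theorem ParabolicHolderWith.sub {g : ℝ → X → ℝ} {L' : ℝ} (hf : ParabolicHolderWith T α L f)
    (hg : ParabolicHolderWith T α L' g) :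
    ParabolicHolderWith T α (L + L') (fun t x => f t x - g t x) where
  space t ht x y hxy := by
    have := abs_sub (f t x - f t y) (g t x - g t y)
    have := hf.space t ht x y hxy
    have := hg.space t ht x y hxy
    rw [add_mul, show f t x - g t x - (f t y - g t y) = f t x - f t y - (g t x - g t y) by ring]
    linarith
  time s hs t ht hst x := by
    have := abs_sub (f t x - f s x) (g t x - g s x)
    have := hf.time s hs t ht hst x
    have := hg.time s hs t ht hst x
    rw [add_mul, show f t x - g t x - (f s x - g s x) = f t x - f s x - (g t x - g s x) by ring]
    linarith

theorem pNorm_sub_lt_top {u v : ℝ → X → ℝ} (hu : pNorm T α u < ⊤) (hv : pNorm T α v < ⊤) :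
    pNorm T α (fun t x => u t x - v t x) < ⊤ := by
  have hsup : ∀ t ∈ Set.Icc 0 T, ∀ x,
      |u t x - v t x| ≤ (pNorm T α u).toReal + (pNorm T α v).toReal :=
    fun t ht x => (abs_sub _ _).trans
      (add_le_add (abs_le_toReal_pNorm hu.ne ht x) (abs_le_toReal_pNorm hv.ne ht x))
  have hH := (parabolicHolderWith_toReal_pNorm hu.ne).sub (parabolicHolderWith_toReal_pNorm hv.ne)
  exact (pNorm_le_ofReal (by positivity) (by positivity) hsup hH).trans_lt ENNReal.ofReal_lt_top

theorem ParabolicHolderWith.abs_le_of_initial_eq_zero (hf : ParabolicHolderWith T α L f)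
    (hL : 0 ≤ L) (hα : 0 ≤ α) (h0 : ∀ x, f 0 x = 0) {t : ℝ} (ht : t ∈ Set.Icc 0 T) (x : X) :
    |f t x| ≤ L * T ^ (α / 2) := by
  rcases eq_or_ne t 0 with rfl | ht0
  · rw [h0, abs_zero]
    exact mul_nonneg hL (Real.rpow_nonneg ht.2 _)
  · have := hf.time 0 ⟨le_rfl, ht.1.trans ht.2⟩ t ht ht0.symm x
    rw [h0, sub_zero, sub_zero, abs_of_nonneg ht.1] at this
    exact this.trans (by gcongr; exacts [ht.1, ht.2])

theorem ParabolicHolderWith.of_exponent_le {A : ℝ} (hT : 0 < T) (hβ : 0 ≤ β) (hβα : β ≤ α)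
    (hL : 0 ≤ L) (hsup : ∀ t ∈ Set.Icc 0 T, ∀ x, |f t x| ≤ A * T ^ (β / 2))
    (hf : ParabolicHolderWith T α L f) :
    ParabolicHolderWith T β (T ^ ((α - β) / 2) * L + 2 * A) f := by
  have hτ : 0 ≤ T ^ ((α - β) / 2) := Real.rpow_nonneg hT.le _
  have hA : ∀ t ∈ Set.Icc 0 T, ∀ x : X, 0 ≤ A := fun t ht x =>
    nonneg_of_mul_nonneg_left ((abs_nonneg _).trans (hsup t ht x)) (Real.rpow_pos_of_pos hT _)
  refine ⟨fun t ht x y hxy => ?_, fun s hs t ht hst x => ?_⟩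
  · have hd := dist_pos.2 hxy
    have := hA t ht x
    rcases le_or_gt (dist x y) (Real.sqrt T) with hnear | hfar
    · have hsqrt : Real.sqrt T ^ (α - β) = T ^ ((α - β) / 2) := by
        rw [Real.sqrt_eq_rpow, ← Real.rpow_mul hT.le, one_div_mul_eq_div]
      calc |f t x - f t y| ≤ L * dist x y ^ α := hf.space t ht x y hxy
        _ ≤ L * (T ^ ((α - β) / 2) * dist x y ^ β) := by
          rw [← hsqrt]; gcongr; exact rpow_le_rpow_sub_mul_rpow hd hnear hβα
        _ ≤ (T ^ ((α - β) / 2) * L + 2 * A) * dist x y ^ β := by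
          nlinarith [Real.rpow_nonneg hd.le β, mul_nonneg hτ hL]
    · have hTd : T ^ (β / 2) ≤ dist x y ^ β := by
        rw [div_eq_mul_one_div, mul_comm, Real.rpow_mul hT.le, ← Real.sqrt_eq_rpow]
        exact Real.rpow_le_rpow (Real.sqrt_nonneg T) hfar.le hβ
      calc |f t x - f t y| ≤ |f t x| + |f t y| := abs_sub _ _
        _ ≤ 2 * A * T ^ (β / 2) := by linarith [hsup t ht x, hsup t ht y]
        _ ≤ (T ^ ((α - β) / 2) * L + 2 * A) * dist x y ^ β := by
          nlinarith [Real.rpow_nonneg hd.le β, mul_nonneg hτ hL]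
  · have hρ : 0 < |t - s| := abs_pos.2 (sub_ne_zero.2 hst.symm)
    have hρT : |t - s| ≤ T := abs_sub_le_iff.2 ⟨by linarith [ht.2, hs.1], by linarith [hs.2, ht.1]⟩
    have := hA t ht x
    calc |f t x - f s x| ≤ L * |t - s| ^ (α / 2) := hf.time s hs t ht hst x
      _ ≤ L * (T ^ ((α - β) / 2) * |t - s| ^ (β / 2)) := by
        rw [sub_div]; gcongr; exact rpow_le_rpow_sub_mul_rpow hρ hρT (by linarith)
      _ ≤ (T ^ ((α - β) / 2) * L + 2 * A) * |t - s| ^ (β / 2) := by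
        nlinarith [Real.rpow_nonneg hρ.le (β / 2), mul_nonneg hτ hL]

theorem ParabolicHolderWith.comp_sub_comp {u v : ℝ → X → ℝ} {g : ℝ → ℝ} {K D B M : ℝ}
    (hg : Differentiable ℝ g) (hg' : Differentiable ℝ (deriv g)) (hK₁ : ∀ z, |deriv g z| ≤ K)
    (hK₂ : ∀ z, |deriv (deriv g) z| ≤ K) (hM : ∀ t ∈ Set.Icc 0 T, ∀ x, |u t x - v t x| ≤ M)
    (huv : ParabolicHolderWith T α D (fun t x => u t x - v t x))
    (hv : ParabolicHolderWith T α B v) :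
    ParabolicHolderWith T α (K * (D + 2 * M * B)) (fun t x => g (u t x) - g (v t x)) := by
  have hK : 0 ≤ K := (abs_nonneg _).trans (hK₁ 0)
  have key : ∀ a b c d r, |a - b| ≤ M → |c - d| ≤ M → |(a - b) - (c - d)| ≤ D * r →
      |b - d| ≤ B * r → |(g a - g b) - (g c - g d)| ≤ K * (D + 2 * M * B) * r := by
    intro a b c d r hab hcd hδ hbd
    have hprod : (|a - b| + |c - d|) * |b - d| ≤ 2 * M * (B * r) :=
      mul_le_mul (by linarith) hbd (abs_nonneg _) (by linarith [abs_nonneg (a - b)])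
    calc |(g a - g b) - (g c - g d)|
        ≤ K * |(a - b) - (c - d)| + K * ((|a - b| + |c - d|) * |b - d|) :=
          abs_sub_sub_sub_le hg hg' hK₁ hK₂ a b c d
      _ ≤ K * (D * r) + K * (2 * M * (B * r)) := by gcongr
      _ = K * (D + 2 * M * B) * r := by ring
  exact ⟨fun t ht x y hxy => key _ _ _ _ _ (hM t ht x) (hM t ht y) (huv.space t ht x y hxy)
      (hv.space t ht x y hxy),
    fun s hs t ht hst x => key _ _ _ _ _ (hM t ht x) (hM s hs x) (huv.time s hs t ht hst x)
      (hv.time s hs t ht hst x)⟩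

end ParabolicHolder

theorem pNorm_comp_sub_comp_le {X : Type*} [MetricSpace X] {T α β : ℝ} {g : ℝ → ℝ}
    {u v : ℝ → X → ℝ} (hT0 : 0 < T) (hT1 : T ≤ 1) (hβ : 0 ≤ β) (hβα : β ≤ α)
    (hg : Differentiable ℝ g) (hg' : Differentiable ℝ (deriv g)) (hc2 : c2Norm g ≠ ⊤)
    (hv : pNorm T α v ≠ ⊤) (hδ : pNorm T α (fun t x => u t x - v t x) ≠ ⊤)
    (h0 : ∀ x, u 0 x = v 0 x) :
    pNorm T β (fun t x => g (u t x) - g (v t x)) ≤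
      ENNReal.ofReal (7 * T ^ ((α - β) / 2) * (c2Norm g).toReal * (1 + (pNorm T α v).toReal) *
        (pNorm T α (fun t x => u t x - v t x)).toReal) := by
  set K := (c2Norm g).toReal
  set B := (pNorm T α v).toReal
  set D := (pNorm T α (fun t x => u t x - v t x)).toReal
  set τ := T ^ ((α - β) / 2)
  have hK₁ : ∀ z, |deriv g z| ≤ K := abs_le_toReal_of_supN_le hc2 (le_add_self.trans le_self_add)
  have hK₂ : ∀ z, |deriv (deriv g) z| ≤ K := abs_le_toReal_of_supN_le hc2 le_add_self
  have hK : 0 ≤ K := ENNReal.toReal_nonneg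
  have hB : 0 ≤ B := ENNReal.toReal_nonneg
  have hD : 0 ≤ D := ENNReal.toReal_nonneg
  have hτ : 0 ≤ τ := Real.rpow_nonneg hT0.le _
  have hTα : T ^ (α / 2) = τ * T ^ (β / 2) := by rw [← Real.rpow_add hT0]; ring_nf
  have hTα1 : T ^ (α / 2) ≤ 1 := Real.rpow_le_one hT0.le hT1 (by linarith)
  have hTβ1 : T ^ (β / 2) ≤ 1 := Real.rpow_le_one hT0.le hT1 (by linarith)
  have hδH : ParabolicHolderWith T α D (fun t x => u t x - v t x) :=
    parabolicHolderWith_toReal_pNorm hδ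
  have hvH : ParabolicHolderWith T α B v := parabolicHolderWith_toReal_pNorm hv
  have hδsup : ∀ t ∈ Set.Icc 0 T, ∀ x, |u t x - v t x| ≤ D * T ^ (α / 2) := fun t ht =>
    hδH.abs_le_of_initial_eq_zero hD (by linarith) (fun x => sub_eq_zero.2 (h0 x)) ht
  have hFsup : ∀ t ∈ Set.Icc 0 T, ∀ x, |g (u t x) - g (v t x)| ≤ K * D * τ * T ^ (β / 2) :=
    fun t ht x => calc
      _ ≤ K * |u t x - v t x| := abs_sub_le_of_abs_deriv_le hg hK₁ _ _
      _ ≤ K * (D * T ^ (α / 2)) := by gcongr; exact hδsup t ht x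
      _ = K * D * τ * T ^ (β / 2) := by rw [hTα]; ring
  have hFH : ParabolicHolderWith T β (τ * (K * (D + 2 * (D * T ^ (α / 2)) * B)) + 2 * (K * D * τ))
      (fun t x => g (u t x) - g (v t x)) :=
    (hδH.comp_sub_comp hg hg' hK₁ hK₂ hδsup hvH).of_exponent_le hT0 hβ hβα (by positivity) hFsup
  refine (pNorm_le_ofReal (by positivity) (by positivity)
    (fun t ht x => (hFsup t ht x).trans (mul_le_of_le_one_right (by positivity) hTβ1)) hFH).trans
    (ENNReal.ofReal_le_ofReal ?_)
  have : τ * K * D * B * T ^ (α / 2) ≤ τ * K * D * B := mul_le_of_le_one_right (by positivity) hTα1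
  nlinarith [mul_nonneg (mul_nonneg (mul_nonneg hτ hK) hD) hB]

theorem stmt_3_general (α β : ℝ) (hβ0 : 0 < β) (hβα : β ≤ α) :
    ∃ C : ℝ, 0 < C ∧
      ∀ (X : Type*) [MetricSpace X] (T : ℝ), 0 < T → T ≤ 1 →
        ∀ g : ℝ → ℝ, Differentiable ℝ g → Differentiable ℝ (deriv g) →
          supN g < ⊤ → supN (deriv g) < ⊤ → supN (deriv (deriv g)) < ⊤ →
            ∀ u v : ℝ → X → ℝ, pNorm T α u < ⊤ → pNorm T α v < ⊤ →
              (∀ x : X, u 0 x = v 0 x) →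
              pNorm T β (fun t x => g (u t x) - g (v t x)) ≤
                ENNReal.ofReal C * ENNReal.ofReal (T ^ ((α - β) / 2)) * c2Norm g *
                  (1 + pNorm T α u + pNorm T α v) *
                    pNorm T α (fun t x => u t x - v t x) := by
  refine ⟨7, by norm_num, fun X _ T hT0 hT1 g hg hg' hgb hg'b hg''b u v hu hv h0 => ?_⟩
  have hc2 : c2Norm g ≠ ⊤ := (ENNReal.add_lt_top.2 ⟨ENNReal.add_lt_top.2 ⟨hgb, hg'b⟩, hg''b⟩).ne
  have hδ := (pNorm_sub_lt_top hu hv).ne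
  refine (pNorm_comp_sub_comp_le hT0 hT1 hβ0.le hβα hg hg' hc2 hv.ne hδ h0).trans ?_
  have h1B : ENNReal.ofReal (1 + (pNorm T α v).toReal) ≤ 1 + pNorm T α u + pNorm T α v := by
    rw [ENNReal.ofReal_add zero_le_one ENNReal.toReal_nonneg, ENNReal.ofReal_one,
      ENNReal.ofReal_toReal hv.ne, add_assoc]
    exact add_le_add_right le_add_self 1
  rw [ENNReal.ofReal_mul (by positivity), ENNReal.ofReal_mul (by positivity),
    ENNReal.ofReal_mul (by positivity), ENNReal.ofReal_mul (by positivity),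
    ENNReal.ofReal_toReal hc2, ENNReal.ofReal_toReal hδ]
  gcongr

theorem stmt_3 (α β : ℝ) (hβ0 : 0 < β) (hβα : β ≤ α) (hα1 : α ≤ 1) :
    ∃ C : ℝ, 0 < C ∧
      ∀ (X : Type*) [MetricSpace X] (T : ℝ), 0 < T → T ≤ 1 →
        ∀ g : ℝ → ℝ, Differentiable ℝ g → Differentiable ℝ (deriv g) →
          supN g < ⊤ → supN (deriv g) < ⊤ → supN (deriv (deriv g)) < ⊤ →
            ∀ u v : ℝ → X → ℝ, pNorm T α u < ⊤ → pNorm T α v < ⊤ →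
              (∀ x : X, u 0 x = v 0 x) →
              pNorm T β (fun t x => g (u t x) - g (v t x)) ≤
                ENNReal.ofReal C * ENNReal.ofReal (T ^ ((α - β) / 2)) * c2Norm g *
                  (1 + pNorm T α u + pNorm T α v) *
                    pNorm T α (fun t x => u t x - v t x) :=
  stmt_3_general α β hβ0 hβα
end

section
/- Let X be a metric space, let 0 < β ≤ α ≤ 1 and T ∈ (0,1], and set ε := β/α. Let h : [0,T] × X → ℝ satisfy ‖h‖_{C_T C^α} < ∞ and ‖h‖_{C_T^{α/2} L^∞} < ∞. Then there is a constant C depending only on α and β such that ‖h‖_{C_T C^β} ≤ C ( T^{(α−β)/2} ‖h‖_{C_T C^α}^{ε} ‖h‖_{C_T^{α/2} L^∞}^{1−ε} + ‖h(0,·)‖_{C^β} ). -/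
/-
Write `h t = h 0 + (h t - h 0)`. The increment `g = h t - h 0` is small in two competing ways:
its `C^α` norm is at most `2 ‖h‖_{C_T C^α}`, while its oscillation is at most
`2 T^{α/2} ‖h‖_{C_T^{α/2} L^∞}`. Bounding a quantity by both and taking the geometric mean with
weights `ε` and `1 - ε` (for the Hölder quotient:
`|g x - g y| ≤ min (a d^α) b ≤ a^ε b^{1-ε} d^{αε}`) gives the `C^β` bound on `g`, with `β = αε`.
-/

open scoped ENNReal

lemma le_rpow_mul_rpow_of_le_of_le {u a b ε : ℝ} (hu : 0 ≤ u) (ha : u ≤ a) (hb : u ≤ b)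
    (hε0 : 0 ≤ ε) (hε1 : ε ≤ 1) : u ≤ a ^ ε * b ^ (1 - ε) := by
  have hε1' : 0 ≤ 1 - ε := sub_nonneg.2 hε1
  have ha0 : 0 ≤ a := hu.trans ha
  calc u = u ^ ε * u ^ (1 - ε) := by
        rw [← Real.rpow_add' hu (by norm_num), add_sub_cancel, Real.rpow_one]
    _ ≤ a ^ ε * b ^ (1 - ε) := by gcongr

section SupNorm

variable {X : Type*}

lemma supN_le_ofReal_iff {f : X → ℝ} {M : ℝ} (hM : 0 ≤ M) :
    supN f ≤ ENNReal.ofReal M ↔ ∀ x, |f x| ≤ M := by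
  simp only [supN, iSup_le_iff, ENNReal.ofReal_le_ofReal_iff hM]

lemma supN_add_le (f g : X → ℝ) : supN (f + g) ≤ supN f + supN g :=
  iSup_le fun x =>
    calc ENNReal.ofReal |f x + g x| ≤ ENNReal.ofReal (|f x| + |g x|) :=
          ENNReal.ofReal_le_ofReal (abs_add_le _ _)
      _ ≤ ENNReal.ofReal |f x| + ENNReal.ofReal |g x| := ENNReal.ofReal_add_le
      _ ≤ supN f + supN g := add_le_add (le_iSup (fun x => ENNReal.ofReal |f x|) x)
          (le_iSup (fun x => ENNReal.ofReal |g x|) x)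

end SupNorm

section Holder

variable {X : Type*} [MetricSpace X]

lemma hSemi_le_ofReal_iff {f : X → ℝ} {α M : ℝ} (hM : 0 ≤ M) :
    hSemi α f ≤ ENNReal.ofReal M ↔ ∀ x y, x ≠ y → |f x - f y| ≤ M * dist x y ^ α := by
  simp only [hSemi, iSup_le_iff, ENNReal.ofReal_le_ofReal_iff hM]
  refine forall₃_congr fun x y hxy => ?_
  exact div_le_iff₀ (Real.rpow_pos_of_pos (dist_pos.2 hxy) α)

lemma hSemi_add_le (α : ℝ) (f g : X → ℝ) : hSemi α (f + g) ≤ hSemi α f + hSemi α g := by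
  refine iSup_le fun x => iSup_le fun y => iSup_le fun hxy => ?_
  set d := dist x y ^ α
  calc ENNReal.ofReal (|(f + g) x - (f + g) y| / d)
      ≤ ENNReal.ofReal (|f x - f y| / d + |g x - g y| / d) := by
        rw [← add_div, Pi.add_apply, Pi.add_apply, add_sub_add_comm]
        gcongr
        exact abs_add_le _ _
    _ ≤ ENNReal.ofReal (|f x - f y| / d) + ENNReal.ofReal (|g x - g y| / d) :=
        ENNReal.ofReal_add_le
    _ ≤ hSemi α f + hSemi α g := add_le_add (le_iSup₂_of_le x y (le_iSup_of_le hxy le_rfl))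
        (le_iSup₂_of_le x y (le_iSup_of_le hxy le_rfl))

lemma hNorm_add_le (α : ℝ) (f g : X → ℝ) : hNorm α (f + g) ≤ hNorm α f + hNorm α g :=
  (add_le_add (supN_add_le f g) (hSemi_add_le α f g)).trans_eq (add_add_add_comm _ _ _ _)

lemma hSemi_mul_le_of_abs_sub_le {f : X → ℝ} {α ε a b : ℝ} (ha : 0 ≤ a) (hb : 0 ≤ b)
    (hε0 : 0 ≤ ε) (hε1 : ε ≤ 1) (hf : ∀ x y, x ≠ y → |f x - f y| ≤ a * dist x y ^ α)
    (hosc : ∀ x y, |f x - f y| ≤ b) :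
    hSemi (α * ε) f ≤ ENNReal.ofReal (a ^ ε * b ^ (1 - ε)) := by
  refine (hSemi_le_ofReal_iff (by positivity)).2 fun x y hxy => ?_
  calc |f x - f y| ≤ (a * dist x y ^ α) ^ ε * b ^ (1 - ε) :=
        le_rpow_mul_rpow_of_le_of_le (abs_nonneg _) (hf x y hxy) (hosc x y) hε0 hε1
    _ = a ^ ε * b ^ (1 - ε) * dist x y ^ (α * ε) := by
        rw [Real.mul_rpow ha (by positivity), ← Real.rpow_mul dist_nonneg]
        ring

lemma hNorm_mul_sub_le {f₀ f₁ : X → ℝ} {α ε A b : ℝ} (hA : 0 ≤ A) (hb : 0 ≤ b)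
    (hε0 : 0 ≤ ε) (hε1 : ε ≤ 1) (hf₀ : hNorm α f₀ ≤ ENNReal.ofReal A)
    (hf₁ : hNorm α f₁ ≤ ENNReal.ofReal A) (hf₁₀ : ∀ x, |f₁ x - f₀ x| ≤ b) :
    hNorm (α * ε) (f₁ - f₀) ≤ ENNReal.ofReal (4 * A ^ ε * b ^ (1 - ε)) := by
  have hsup {f : X → ℝ} (hf : hNorm α f ≤ ENNReal.ofReal A) (x : X) : |f x| ≤ A :=
    (supN_le_ofReal_iff hA).1 (le_self_add.trans hf) x
  have hhol {f : X → ℝ} (hf : hNorm α f ≤ ENNReal.ofReal A) :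
      ∀ x y, x ≠ y → |f x - f y| ≤ A * dist x y ^ α :=
    (hSemi_le_ofReal_iff hA).1 (le_add_self.trans hf)
  have hbound : (2 * A) ^ ε * (2 * b) ^ (1 - ε) = 2 * (A ^ ε * b ^ (1 - ε)) := by
    rw [Real.mul_rpow (by norm_num) hA, Real.mul_rpow (by norm_num) hb,
      mul_mul_mul_comm, ← Real.rpow_add' (by norm_num) (by norm_num), add_sub_cancel,
      Real.rpow_one]
  rw [show 4 * A ^ ε * b ^ (1 - ε) = 2 * (A ^ ε * b ^ (1 - ε)) + 2 * (A ^ ε * b ^ (1 - ε)) by ring,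
    ENNReal.ofReal_add (by positivity) (by positivity), ← hbound]
  refine add_le_add ((supN_le_ofReal_iff (by positivity)).2 fun x => ?_) ?_
  · rw [Pi.sub_apply]
    refine le_rpow_mul_rpow_of_le_of_le (abs_nonneg _) ?_ ?_ hε0 hε1
    · linarith [abs_sub (f₁ x) (f₀ x), hsup hf₁ x, hsup hf₀ x]
    · linarith [hf₁₀ x]
  · refine hSemi_mul_le_of_abs_sub_le (by positivity) (by positivity) hε0 hε1
      (fun x y hxy => ?_) (fun x y => ?_) <;> simp only [Pi.sub_apply]
    · have := abs_sub (f₁ x - f₁ y) (f₀ x - f₀ y)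
      rw [sub_sub_sub_comm] at this
      linarith [hhol hf₁ x y hxy, hhol hf₀ x y hxy]
    · linarith [abs_sub (f₁ x - f₀ x) (f₁ y - f₀ y), hf₁₀ x, hf₁₀ y]

lemma hNorm_le_pCTC {u : ℝ → X → ℝ} {T α t : ℝ} (ht : t ∈ Set.Icc 0 T) :
    hNorm α (u t) ≤ pCTC T α u :=
  le_iSup₂ (f := fun t (_ : t ∈ Set.Icc (0 : ℝ) T) => hNorm α (u t)) t ht

end Holder

lemma abs_sub_le_of_pHold_le {X : Type*} {u : ℝ → X → ℝ} {T α M s t : ℝ} (hM : 0 ≤ M)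
    (hu : pHold T α u ≤ ENNReal.ofReal M) (hs : s ∈ Set.Icc 0 T) (ht : t ∈ Set.Icc 0 T)
    (x : X) : |u t x - u s x| ≤ M * |t - s| ^ (α / 2) := by
  rcases eq_or_ne s t with rfl | hst
  · simp only [sub_self, abs_zero]
    positivity
  rw [← div_le_iff₀ (Real.rpow_pos_of_pos (abs_pos.2 (sub_ne_zero.2 hst.symm)) _),
    ← ENNReal.ofReal_le_ofReal_iff hM]
  refine le_trans ?_ hu
  exact le_iSup₂_of_le s hs <| le_iSup₂_of_le t ht <| le_iSup₂_of_le hst x le_rfl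

lemma pCTC_mul_le {X : Type*} [MetricSpace X] {u : ℝ → X → ℝ} {T α ε : ℝ} (hT : 0 ≤ T)
    (hα : 0 ≤ α) (hε0 : 0 ≤ ε) (hε1 : ε ≤ 1) (hA : pCTC T α u ≠ ⊤) (hB : pHold T α u ≠ ⊤) :
    pCTC T (α * ε) u ≤ hNorm (α * ε) (u 0) +
      4 * (ENNReal.ofReal (T ^ (α / 2 * (1 - ε))) * pCTC T α u ^ ε * pHold T α u ^ (1 - ε)) := by
  set A := (pCTC T α u).toReal
  set B := (pHold T α u).toReal
  have hA' : pCTC T α u = ENNReal.ofReal A := (ENNReal.ofReal_toReal hA).symm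
  have hB' : pHold T α u = ENNReal.ofReal B := (ENNReal.ofReal_toReal hB).symm
  have h0 : (0 : ℝ) ∈ Set.Icc 0 T := ⟨le_rfl, hT⟩
  have hinc {t : ℝ} (ht : t ∈ Set.Icc 0 T) (x : X) : |u t x - u 0 x| ≤ B * T ^ (α / 2) := by
    refine (abs_sub_le_of_pHold_le ENNReal.toReal_nonneg hB'.le h0 ht x).trans ?_
    rw [sub_zero, abs_of_nonneg ht.1]
    gcongr
    exacts [ht.1, ht.2]
  have hbound : ENNReal.ofReal (4 * A ^ ε * (B * T ^ (α / 2)) ^ (1 - ε)) =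
      4 * (ENNReal.ofReal (T ^ (α / 2 * (1 - ε))) * pCTC T α u ^ ε * pHold T α u ^ (1 - ε)) := by
    have hε1' : 0 ≤ 1 - ε := sub_nonneg.2 hε1
    rw [hA', hB', ENNReal.ofReal_rpow_of_nonneg ENNReal.toReal_nonneg hε0,
      ENNReal.ofReal_rpow_of_nonneg ENNReal.toReal_nonneg hε1',
      ← ENNReal.ofReal_mul (by positivity), ← ENNReal.ofReal_mul (by positivity),
      ← ENNReal.ofReal_ofNat 4, ← ENNReal.ofReal_mul (by norm_num),
      Real.mul_rpow ENNReal.toReal_nonneg (by positivity), ← Real.rpow_mul hT]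
    congr 1
    ring
  refine iSup₂_le fun t ht => ?_
  calc hNorm (α * ε) (u t) = hNorm (α * ε) (u 0 + (u t - u 0)) := by rw [add_sub_cancel]
    _ ≤ hNorm (α * ε) (u 0) + hNorm (α * ε) (u t - u 0) := hNorm_add_le _ _ _
    _ ≤ _ := by
        rw [← hbound]
        exact add_le_add_right (hNorm_mul_sub_le ENNReal.toReal_nonneg (by positivity) hε0 hε1
          ((hNorm_le_pCTC h0).trans hA'.le) ((hNorm_le_pCTC ht).trans hA'.le) (hinc ht)) _

theorem stmt_4_general (α β : ℝ) (hβ0 : 0 < β) (hβα : β ≤ α) :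
    ∃ C : ℝ, 0 < C ∧
      ∀ (X : Type*) [MetricSpace X] (T : ℝ), 0 < T → T ≤ 1 →
        ∀ h : ℝ → X → ℝ, pCTC T α h < ⊤ → pHold T α h < ⊤ →
          pCTC T β h ≤
            ENNReal.ofReal C *
              (ENNReal.ofReal (T ^ ((α - β) / 2)) *
                  (pCTC T α h) ^ (β / α) * (pHold T α h) ^ (1 - β / α)
                + hNorm β (h 0)) := by
  have hα : 0 < α := hβ0.trans_le hβα
  have hexp : α / 2 * (1 - β / α) = (α - β) / 2 := by field_simp
  refine ⟨4, by norm_num, fun X _ T hT _ h hA hB => ?_⟩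
  have key := pCTC_mul_le (u := h) hT.le hα.le (by positivity) ((div_le_one hα).2 hβα) hA.ne hB.ne
  rw [mul_div_cancel₀ β hα.ne', hexp] at key
  rw [ENNReal.ofReal_ofNat, mul_add, add_comm]
  exact key.trans <|
    add_le_add_left (le_mul_of_one_le_left zero_le (by norm_num : (1 : ℝ≥0∞) ≤ 4)) _

theorem stmt_4 (α β : ℝ) (hβ0 : 0 < β) (hβα : β ≤ α) (hα1 : α ≤ 1) :
    ∃ C : ℝ, 0 < C ∧
      ∀ (X : Type*) [MetricSpace X] (T : ℝ), 0 < T → T ≤ 1 →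
        ∀ h : ℝ → X → ℝ, pCTC T α h < ⊤ → pHold T α h < ⊤ →
          pCTC T β h ≤
            ENNReal.ofReal C *
              (ENNReal.ofReal (T ^ ((α - β) / 2)) *
                  (pCTC T α h) ^ (β / α) * (pHold T α h) ^ (1 - β / α)
                + hNorm β (h 0)) :=
  stmt_4_general α β hβ0 hβα
end
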